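/- A function J : (0,1) → ℝ whose derivative satisfies the Chernoff–Savage growth bound |J′(u)| ≤ c(u(1-u))^{-1-δ} with 0 < δ < 1/4 on (0, α₀) ∪ (1-α₀, 1), and which is continuous on [α₀, 1-α₀], is square integrable on (0,1). -/

import Mathlib

open MeasureTheory Set

/-!
Integrating the derivative bound from a fixed interior point shows `|J u| ≤ C + K u^{-δ}` near `0`,
and `u^{-2δ}` is integrable on `(0, α₀)` because `2δ < 1`. The end near `1` reduces to this one
under `u ↦ 1 - u`, and on `[α₀, 1 - α₀]` the function `J²` is continuous on a compact interval.
-/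

theorem norm_sub_le_sub_of_norm_deriv_le {E : Type*} [NormedAddCommGroup E] [NormedSpace ℝ E]
    {f f' : ℝ → E} {g g' : ℝ → ℝ} {a b : ℝ} (hab : a ≤ b)
    (hf : ∀ x ∈ Icc a b, HasDerivAt f (f' x) x) (hg : ∀ x ∈ Icc a b, HasDerivAt g (g' x) x)
    (bound : ∀ x ∈ Icc a b, ‖f' x‖ ≤ g' x) : ‖f b - f a‖ ≤ g b - g a :=
  image_norm_le_of_norm_deriv_right_le_deriv_boundary' (f := fun x => f x - f a)
    (B := fun x => g x - g a)
    (fun x hx => ((hf x hx).continuousAt.sub continuousAt_const).continuousWithinAt)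
    (fun x hx => ((hf x (Ico_subset_Icc_self hx)).sub_const (f a)).hasDerivWithinAt)
    (by simp)
    (fun x hx => ((hg x hx).continuousAt.sub continuousAt_const).continuousWithinAt)
    (fun x hx => ((hg x (Ico_subset_Icc_self hx)).sub_const (g a)).hasDerivWithinAt)
    (fun x hx => bound x (Ico_subset_Icc_self hx)) (right_mem_Icc.2 hab)

theorem abs_le_of_abs_deriv_le_rpow {f f' : ℝ → ℝ} {C δ a b u : ℝ} (hC : 0 ≤ C) (hδ : 0 < δ)
    (hf : ∀ x ∈ Ioo 0 a, HasDerivAt f (f' x) x)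
    (bound : ∀ x ∈ Ioo 0 a, |f' x| ≤ C * x ^ (-(1 + δ)))
    (hb : b ∈ Ioo 0 a) (hu : u ∈ Ioo 0 a) :
    |f u| ≤ |f b| + C / δ * (b ^ (-δ) + u ^ (-δ)) := by
  have hg : ∀ x ∈ Ioo 0 a,
      HasDerivAt (fun x => -(C / δ) * x ^ (-δ)) (C * x ^ (-(1 + δ))) x := by
    intro x hx
    refine ((Real.hasDerivAt_rpow_const (Or.inl hx.1.ne')).const_mul _).congr_deriv ?_
    rw [show -δ - 1 = -(1 + δ) by ring]
    field_simp
  have hcompare : ∀ x ∈ Ioo 0 a, ∀ y ∈ Ioo 0 a, x ≤ y →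
      |f y - f x| ≤ C / δ * (x ^ (-δ) - y ^ (-δ)) := by
    intro x hx y hy hxy
    have hsub : Icc x y ⊆ Ioo 0 a := Icc_subset_Ioo hx.1 hy.2
    have := norm_sub_le_sub_of_norm_deriv_le hxy (fun t ht => hf t (hsub ht))
      (fun t ht => hg t (hsub ht)) (fun t ht => bound t (hsub ht))
    rw [Real.norm_eq_abs] at this
    linarith
  have hCδ : 0 ≤ C / δ := div_nonneg hC hδ.le
  have hbpos : 0 ≤ b ^ (-δ) := Real.rpow_nonneg hb.1.le _
  have hupos : 0 ≤ u ^ (-δ) := Real.rpow_nonneg hu.1.le _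
  have htriangle := abs_sub_abs_le_abs_sub (f u) (f b)
  rcases le_total u b with hub | hbu
  · have hub' := hcompare u hu b hb hub
    rw [abs_sub_comm] at hub'
    nlinarith
  · have hbu' := hcompare b hb u hu hbu
    nlinarith

theorem memLp_two_rpow_neg_restrict_Ioo {δ a : ℝ} (hδ : δ < 1 / 2) (ha : 0 < a) :
    MemLp (fun x : ℝ => x ^ (-δ)) 2 (volume.restrict (Ioo 0 a)) := by
  have hmeas : AEStronglyMeasurable (fun x : ℝ => x ^ (-δ)) (volume.restrict (Ioo 0 a)) :=
    (measurable_id.pow_const _).aestronglyMeasurable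
  rw [memLp_two_iff_integrable_sq hmeas]
  refine ((intervalIntegral.integrableOn_Ioo_rpow_iff ha).2 (by linarith : -1 < -δ * 2)).congr_fun
    (fun x hx => ?_) measurableSet_Ioo
  rw [← Real.rpow_two, ← Real.rpow_mul hx.1.le]

theorem intervalIntegrable_sq_of_abs_deriv_le_rpow {f f' : ℝ → ℝ} {C δ a : ℝ} (hC : 0 ≤ C)
    (hδ₀ : 0 < δ) (hδ : δ < 1 / 2) (ha : 0 < a)
    (hf : ∀ x ∈ Ioo 0 a, HasDerivAt f (f' x) x)
    (bound : ∀ x ∈ Ioo 0 a, |f' x| ≤ C * x ^ (-(1 + δ))) :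
    IntervalIntegrable (fun x => f x ^ 2) volume 0 a := by
  have hmid : a / 2 ∈ Ioo 0 a := ⟨half_pos ha, half_lt_self ha⟩
  have hmeas : AEStronglyMeasurable f (volume.restrict (Ioo 0 a)) :=
    (ContinuousOn.aestronglyMeasurable (fun x hx => (hf x hx).continuousAt.continuousWithinAt)
      measurableSet_Ioo)
  have hdom : MemLp (fun x => (|f (a / 2)| + C / δ * (a / 2) ^ (-δ)) + C / δ * x ^ (-δ)) 2
      (volume.restrict (Ioo 0 a)) :=
    (memLp_const (|f (a / 2)| + C / δ * (a / 2) ^ (-δ))).add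
      ((memLp_two_rpow_neg_restrict_Ioo hδ ha).const_mul (C / δ))
  rw [intervalIntegrable_iff_integrableOn_Ioo_of_le ha.le, IntegrableOn,
    ← memLp_two_iff_integrable_sq hmeas]
  refine hdom.of_le hmeas ((ae_restrict_iff' measurableSet_Ioo).2 (.of_forall fun x hx => ?_))
  have := abs_le_of_abs_deriv_le_rpow hC hδ₀ hf bound hmid hx
  rw [Real.norm_eq_abs, Real.norm_eq_abs]
  exact this.trans ((le_of_eq (by ring)).trans (le_abs_self _))

theorem mul_one_sub_rpow_neg_le {u p : ℝ} (hu : 0 < u) (hu' : u ≤ 1 / 2) (hp : 0 ≤ p) :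
    (u * (1 - u)) ^ (-p) ≤ 2 ^ p * u ^ (-p) := by
  rw [Real.mul_rpow hu.le (by linarith), mul_comm]
  gcongr
  calc (1 - u) ^ (-p) ≤ (1 / 2 : ℝ) ^ (-p) :=
        Real.rpow_le_rpow_of_nonpos (by norm_num) (by linarith) (by linarith)
    _ = 2 ^ p := by rw [one_div, Real.inv_rpow zero_le_two, Real.rpow_neg zero_le_two, inv_inv]

theorem intervalIntegrable_sq_of_chernoffSavage_bound {f f' : ℝ → ℝ} {c δ a : ℝ} (hc : 0 ≤ c)
    (hδ₀ : 0 < δ) (hδ : δ < 1 / 2) (ha₀ : 0 < a) (ha : a ≤ 1 / 2)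
    (hf : ∀ x ∈ Ioo 0 a, HasDerivAt f (f' x) x)
    (bound : ∀ x ∈ Ioo 0 a, |f' x| ≤ c * (x * (1 - x)) ^ (-(1 + δ))) :
    IntervalIntegrable (fun x => f x ^ 2) volume 0 a :=
  intervalIntegrable_sq_of_abs_deriv_le_rpow (C := c * 2 ^ (1 + δ)) (by positivity) hδ₀ hδ ha₀ hf
    fun x hx => (bound x hx).trans <| by
      rw [mul_assoc]
      exact mul_le_mul_of_nonneg_left
        (mul_one_sub_rpow_neg_le hx.1 (hx.2.le.trans ha) (by linarith)) hc

/-- Chernoff–Savage condition implies square integrability: if `J` is differentiable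
on `(0,α₀) ∪ (1-α₀,1)` with `|J'(u)| ≤ c (u(1-u))^{-1-δ}` there for `0 < δ < 1/4`, and
continuous on `[α₀, 1-α₀]`, then `∫₀¹ J(u)² du < ∞`. -/
theorem chernoffSavage_square_integrable (J J' : ℝ → ℝ) (c δ α₀ : ℝ)
    (hc : 0 < c) (hδ₁ : 0 < δ) (hδ₂ : δ < 1/4) (hα : α₀ ∈ Set.Ioo (0:ℝ) (1/2))
    (hderiv : ∀ u ∈ Set.Ioo (0:ℝ) α₀ ∪ Set.Ioo (1 - α₀) 1, HasDerivAt J (J' u) u)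
    (hbound : ∀ u ∈ Set.Ioo (0:ℝ) α₀ ∪ Set.Ioo (1 - α₀) 1,
      |J' u| ≤ c * (u * (1 - u)) ^ (-(1 + δ)))
    (hcont : ContinuousOn J (Set.Icc α₀ (1 - α₀))) :
    IntegrableOn (fun u => (J u) ^ 2) (Set.Ioo 0 1) := by
  obtain ⟨hα₀, hα₁⟩ := hα
  have hδ : δ < 1 / 2 := by linarith
  have hleft : IntervalIntegrable (fun u => J u ^ 2) volume 0 α₀ :=
    intervalIntegrable_sq_of_chernoffSavage_bound hc.le hδ₁ hδ hα₀ hα₁.le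
      (fun u hu => hderiv u (.inl hu)) (fun u hu => hbound u (.inl hu))
  have hreflect : ∀ u ∈ Ioo 0 α₀, 1 - u ∈ Ioo (1 - α₀) 1 :=
    fun u hu => ⟨by linarith [hu.2], by linarith [hu.1]⟩
  have hright_reflected : IntervalIntegrable (fun u => J (1 - u) ^ 2) volume 0 α₀ :=
    intervalIntegrable_sq_of_chernoffSavage_bound hc.le hδ₁ hδ hα₀ hα₁.le
      (fun u hu => (hderiv _ (.inr (hreflect u hu))).comp_const_sub 1 u)
      (fun u hu => by simpa [mul_comm] using hbound _ (.inr (hreflect u hu)))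
  have hmid : IntervalIntegrable (fun u => J u ^ 2) volume α₀ (1 - α₀) :=
    (hcont.pow 2).intervalIntegrable_of_Icc (by linarith)
  have hright : IntervalIntegrable (fun u => J u ^ 2) volume (1 - α₀) 1 := by
    simpa using (hright_reflected.comp_sub_left 1).symm
  rw [← intervalIntegrable_iff_integrableOn_Ioo_of_le zero_le_one]
  exact hleft.trans (hmid.trans hright)
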